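/- Let Ω ∈ S², κ > 0, M_Ω the von Mises density with normalized measure on S², h integrable, and S a symmetric 3×3 matrix. Then ∫_{S²} (S : (Id − 3ω⊗ω)) h(ω·Ω) M_Ω(ω) P_{Ω⊥}(ω) dω = −6 C₂ P_{Ω⊥} S Ω, where C₂ = (1/4)∫₀^π cosθ sin³θ h(cosθ) M̃(θ) dθ. -/

import Mathlib

/-! Write `ω = sin θ • w φ + cos θ • Ω` with `w φ = cos φ • e₁ + sin φ • e₂`, so that
`P_{Ω⊥} ω = sin θ • w φ` and `S : (Id − 3ω⊗ω) = tr S − 3 ω·Sω`. Since `w (φ + π) = -w φ`, every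
part of the `φ`-integrand that is odd in `w` integrates to zero over a period; only the cross term
`-6 sin²θ cos θ (SΩ·w) w` survives, and `∫₀^{2π} w ⊗ w dφ = π P_{Ω⊥}`. What remains of the
`θ`-integral is `4 C₂` times the constant vector `P_{Ω⊥} S Ω`. -/

open Real

/-- The orthogonal projection matrix `P_{x⊥} = Id - x ⊗ x`. -/
noncomputable def projMat (x : Fin 3 → ℝ) : Fin 3 → Fin 3 → ℝ :=
  fun i j => (if i = j then (1 : ℝ) else 0) - x i * x j

/-- Parametrization of the unit sphere adapted to `Ω` via an orthonormal frame. -/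
noncomputable def ωpar (Ω e₁ e₂ : Fin 3 → ℝ) (θ φ : ℝ) : Fin 3 → ℝ :=
  fun i => Real.sin θ * Real.cos φ * e₁ i + Real.sin θ * Real.sin φ * e₂ i + Real.cos θ * Ω i

/-- Normalizing constant of the von Mises density for `∫_{S²} dω = 1`. -/
noncomputable def Znorm (κ : ℝ) : ℝ :=
  (1/2) * ∫ θ in (0:ℝ)..π, Real.exp (κ * Real.cos θ) * Real.sin θ

/-- `C₂ = (1/4)∫₀^π cosθ sin³θ h(cosθ) M̃(θ) dθ`. -/
noncomputable def Ctwo (h : ℝ → ℝ) (κ : ℝ) : ℝ :=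
  (1/4) * ∫ θ in (0:ℝ)..π,
    Real.cos θ * Real.sin θ ^ 3 * h (Real.cos θ) * (Real.exp (κ * Real.cos θ) / Znorm κ)

open Matrix

theorem intervalIntegral_eq_zero_of_antiperiodic {E : Type*} [NormedAddCommGroup E]
    [NormedSpace ℝ E] {f : ℝ → E} {c : ℝ} (hf : Continuous f)
    (hc : Function.Antiperiodic f c) : ∫ x in (0:ℝ)..2 * c, f x = 0 := by
  have hshift : ∫ x in c..2 * c, f x = -∫ x in (0:ℝ)..c, f x := by
    have h := intervalIntegral.integral_comp_add_right (a := 0) (b := c) f c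
    simp only [hc _, intervalIntegral.integral_neg, zero_add] at h
    rw [two_mul, ← h]
  rw [← intervalIntegral.integral_add_adjacent_intervals (hf.intervalIntegrable _ _)
    (hf.intervalIntegrable _ _), hshift, add_neg_cancel]

section Circle

variable {ι : Type*}

noncomputable def frameCircle (e₁ e₂ : ι → ℝ) (φ : ℝ) : ι → ℝ := cos φ • e₁ + sin φ • e₂

@[fun_prop]
theorem continuous_frameCircle (e₁ e₂ : ι → ℝ) : Continuous (frameCircle e₁ e₂) := by
  unfold frameCircle; fun_prop

theorem frameCircle_antiperiodic (e₁ e₂ : ι → ℝ) : Function.Antiperiodic (frameCircle e₁ e₂) π :=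
  fun φ => by simp only [frameCircle, cos_add_pi, sin_add_pi, neg_smul, neg_add]

theorem integral_comp_frameCircle_of_odd {E : Type*} [NormedAddCommGroup E] [NormedSpace ℝ E]
    {f : (ι → ℝ) → E} (hf : Continuous f) (hodd : ∀ x, f (-x) = -f x) (e₁ e₂ : ι → ℝ) :
    ∫ φ in (0:ℝ)..2 * π, f (frameCircle e₁ e₂ φ) = 0 :=
  intervalIntegral_eq_zero_of_antiperiodic (by fun_prop)
    fun φ => by rw [frameCircle_antiperiodic, hodd]

theorem integral_dotProduct_smul_frameCircle [Fintype ι] (v e₁ e₂ : ι → ℝ) :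
    ∫ φ in (0:ℝ)..2 * π, (v ⬝ᵥ frameCircle e₁ e₂ φ) • frameCircle e₁ e₂ φ
      = π • ((v ⬝ᵥ e₁) • e₁ + (v ⬝ᵥ e₂) • e₂) := by
  have hexpand : ∀ φ, (v ⬝ᵥ frameCircle e₁ e₂ φ) • frameCircle e₁ e₂ φ
      = (cos φ ^ 2) • ((v ⬝ᵥ e₁) • e₁) + (sin φ * cos φ) • ((v ⬝ᵥ e₂) • e₁ + (v ⬝ᵥ e₁) • e₂)
        + (sin φ ^ 2) • ((v ⬝ᵥ e₂) • e₂) := by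
    intro φ
    simp only [frameCircle, dotProduct_add, dotProduct_smul, smul_eq_mul, smul_add,
      smul_smul]
    module
  simp only [hexpand]
  rw [intervalIntegral.integral_add (Continuous.intervalIntegrable (by fun_prop) _ _)
      (Continuous.intervalIntegrable (by fun_prop) _ _),
    intervalIntegral.integral_add (Continuous.intervalIntegrable (by fun_prop) _ _)
      (Continuous.intervalIntegrable (by fun_prop) _ _)]
  simp only [intervalIntegral.integral_smul_const, integral_cos_sq, integral_sin_sq,
    integral_sin_mul_cos₁, sin_two_pi, cos_two_pi, sin_zero, cos_zero]
  module

end Circle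

theorem sum_mul_one_sub_mul_eq_trace_sub {ι : Type*} [Fintype ι] [DecidableEq ι]
    (S : Matrix ι ι ℝ) (c : ℝ) (x : ι → ℝ) :
    ∑ i, ∑ j, S i j * ((if i = j then (1:ℝ) else 0) - c * x i * x j)
      = S.trace - c * (x ⬝ᵥ S *ᵥ x) := by
  simp only [mul_sub, Finset.sum_sub_distrib, mul_ite, mul_one, mul_zero,
    Finset.sum_ite_eq, Finset.mem_univ, if_true, Matrix.trace, Matrix.diag, dotProduct,
    mulVec, Finset.mul_sum]
  congr 1
  refine Finset.sum_congr rfl fun i _ => Finset.sum_congr rfl fun j _ => by ring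

theorem dotProduct_mulVec_add_of_isSymm {ι : Type*} [Fintype ι] {S : Matrix ι ι ℝ}
    (hS : S.IsSymm) (a b : ℝ) (u w : ι → ℝ) :
    (a • u + b • w) ⬝ᵥ S *ᵥ (a • u + b • w)
      = a ^ 2 * (u ⬝ᵥ S *ᵥ u) + 2 * a * b * (S *ᵥ w ⬝ᵥ u) + b ^ 2 * (w ⬝ᵥ S *ᵥ w) := by
  have hswap : w ⬝ᵥ S *ᵥ u = S *ᵥ w ⬝ᵥ u := by
    rw [dotProduct_mulVec, ← mulVec_transpose, hS.eq]
  simp only [mulVec_add, mulVec_smul, dotProduct_add, add_dotProduct, dotProduct_smul,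
    smul_dotProduct, smul_eq_mul, hswap, dotProduct_comm u (S *ᵥ w)]
  ring

theorem sum_mul_apply_eq_one_apply_of_orthonormal {ι : Type*} [Fintype ι] [DecidableEq ι]
    (b : ι → ι → ℝ) (hb : ∀ k l, b k ⬝ᵥ b l = (1 : Matrix ι ι ℝ) k l) (i j : ι) :
    ∑ k, b k i * b k j = (1 : Matrix ι ι ℝ) i j := by
  have hrows : Matrix.of b * (Matrix.of b)ᵀ = 1 := by
    ext k l
    exact hb k l
  rw [← mul_eq_one_comm.mp hrows]
  rfl

theorem sum_dotProduct_smul_of_orthonormal {ι : Type*} [Fintype ι] [DecidableEq ι]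
    (b : ι → ι → ℝ) (hb : ∀ k l, b k ⬝ᵥ b l = (1 : Matrix ι ι ℝ) k l) (v : ι → ℝ) :
    ∑ k, (v ⬝ᵥ b k) • b k = v := by
  ext i
  calc (∑ k, (v ⬝ᵥ b k) • b k) i = ∑ j, v j * ∑ k, b k j * b k i := by
        simp only [Finset.sum_apply, Pi.smul_apply, smul_eq_mul, dotProduct, Finset.sum_mul,
          Finset.mul_sum, mul_assoc]
        exact Finset.sum_comm
    _ = ∑ j, v j * (1 : Matrix ι ι ℝ) j i := by
        simp only [sum_mul_apply_eq_one_apply_of_orthonormal b hb]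
    _ = v i := by simp [Matrix.one_apply]

theorem projMat_mulVec (x v : Fin 3 → ℝ) : projMat x *ᵥ v = v - (x ⬝ᵥ v) • x := by
  ext i
  simp only [projMat, mulVec, dotProduct, sub_mul, Finset.sum_sub_distrib, ite_mul, one_mul,
    zero_mul, Finset.sum_ite_eq, Finset.mem_univ, if_true, Pi.sub_apply, Pi.smul_apply,
    smul_eq_mul, Finset.sum_mul]
  congr 1
  exact Finset.sum_congr rfl fun j _ => by ring

theorem projMat_mulVec_of_orthonormal {Ω e₁ e₂ : Fin 3 → ℝ}
    (h1 : e₁ ⬝ᵥ e₁ = 1) (h2 : e₂ ⬝ᵥ e₂ = 1) (hΩ : Ω ⬝ᵥ Ω = 1)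
    (h12 : e₁ ⬝ᵥ e₂ = 0) (h1Ω : e₁ ⬝ᵥ Ω = 0) (h2Ω : e₂ ⬝ᵥ Ω = 0) (v : Fin 3 → ℝ) :
    projMat Ω *ᵥ v = (v ⬝ᵥ e₁) • e₁ + (v ⬝ᵥ e₂) • e₂ := by
  have hframe : ∀ k l, ![e₁, e₂, Ω] k ⬝ᵥ ![e₁, e₂, Ω] l = (1 : Matrix (Fin 3) (Fin 3) ℝ) k l := by
    intro k l
    fin_cases k <;> fin_cases l <;> simp [one_apply, dotProduct_comm Ω, dotProduct_comm e₂ e₁, *]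
  have hv := sum_dotProduct_smul_of_orthonormal _ hframe v
  rw [Fin.sum_univ_three] at hv
  rw [projMat_mulVec, dotProduct_comm Ω]
  nth_rewrite 1 [← hv]
  simp

theorem ωpar_eq (Ω e₁ e₂ : Fin 3 → ℝ) (θ φ : ℝ) :
    ωpar Ω e₁ e₂ θ φ = sin θ • frameCircle e₁ e₂ φ + cos θ • Ω := by
  ext i
  simp only [ωpar, frameCircle, Pi.add_apply, Pi.smul_apply, smul_eq_mul]
  ring

theorem integral_sphere_slice {S : Matrix (Fin 3) (Fin 3) ℝ} (hS : S.IsSymm) {Ω e₁ e₂ : Fin 3 → ℝ}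
    (hΩ : Ω ⬝ᵥ Ω = 1) (h1Ω : e₁ ⬝ᵥ Ω = 0) (h2Ω : e₂ ⬝ᵥ Ω = 0) (θ : ℝ) :
    ∫ φ in (0:ℝ)..2 * π,
      (S.trace - 3 * (ωpar Ω e₁ e₂ θ φ ⬝ᵥ S *ᵥ ωpar Ω e₁ e₂ θ φ)) •
        (ωpar Ω e₁ e₂ θ φ - (ωpar Ω e₁ e₂ θ φ ⬝ᵥ Ω) • Ω)
      = (-6 * π * sin θ ^ 2 * cos θ) • ((S *ᵥ Ω ⬝ᵥ e₁) • e₁ + (S *ᵥ Ω ⬝ᵥ e₂) • e₂) := by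
  set odd : (Fin 3 → ℝ) → Fin 3 → ℝ := fun x =>
    (S.trace - 3 * (sin θ ^ 2 * (x ⬝ᵥ S *ᵥ x) + cos θ ^ 2 * (Ω ⬝ᵥ S *ᵥ Ω))) • x
  have hodd : ∀ x, odd (-x) = -odd x := fun x => by
    simp only [odd, neg_dotProduct, mulVec_neg, dotProduct_neg, neg_neg, smul_neg]
  have hsplit : ∀ φ, (S.trace - 3 * (ωpar Ω e₁ e₂ θ φ ⬝ᵥ S *ᵥ ωpar Ω e₁ e₂ θ φ)) •
      (ωpar Ω e₁ e₂ θ φ - (ωpar Ω e₁ e₂ θ φ ⬝ᵥ Ω) • Ω)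
      = sin θ • odd (frameCircle e₁ e₂ φ) + (-6 * sin θ ^ 2 * cos θ) •
        ((S *ᵥ Ω ⬝ᵥ frameCircle e₁ e₂ φ) • frameCircle e₁ e₂ φ) := by
    intro φ
    have hperp : frameCircle e₁ e₂ φ ⬝ᵥ Ω = 0 := by
      simp [frameCircle, add_dotProduct, h1Ω, h2Ω]
    rw [ωpar_eq, dotProduct_mulVec_add_of_isSymm hS]
    simp only [odd, add_dotProduct, smul_dotProduct, hperp, hΩ, smul_eq_mul]
    module
  simp only [hsplit]
  rw [intervalIntegral.integral_add (Continuous.intervalIntegrable (by fun_prop) _ _)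
      (Continuous.intervalIntegrable (by fun_prop) _ _),
    intervalIntegral.integral_smul, intervalIntegral.integral_smul,
    integral_comp_frameCircle_of_odd (by fun_prop) hodd, integral_dotProduct_smul_frameCircle]
  module

theorem stmt11_general (κ : ℝ) (h : ℝ → ℝ)
    (S : Fin 3 → Fin 3 → ℝ) (hS : ∀ i j, S i j = S j i)
    (Ω e₁ e₂ : Fin 3 → ℝ)
    (h1 : ∑ i, e₁ i * e₁ i = 1) (h2 : ∑ i, e₂ i * e₂ i = 1) (hΩ : ∑ i, Ω i * Ω i = 1)
    (h12 : ∑ i, e₁ i * e₂ i = 0) (h1Ω : ∑ i, e₁ i * Ω i = 0) (h2Ω : ∑ i, e₂ i * Ω i = 0) :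
    ((4 * π)⁻¹ • (∫ θ in (0:ℝ)..π, ∫ φ in (0:ℝ)..(2 * π),
      (Real.sin θ * h (Real.cos θ) * (Real.exp (κ * Real.cos θ) / Znorm κ) *
        (∑ i, ∑ j, S i j * ((if i = j then (1:ℝ) else 0) -
          3 * ωpar Ω e₁ e₂ θ φ i * ωpar Ω e₁ e₂ θ φ j))) •
      (fun i => ωpar Ω e₁ e₂ θ φ i -
        (∑ j, ωpar Ω e₁ e₂ θ φ j * Ω j) * Ω i : Fin 3 → ℝ)))
    = (-6 * Ctwo h κ) • (fun i => ∑ j, projMat Ω i j * (∑ k, S j k * Ω k)) := by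
  have hproj := projMat_mulVec_of_orthonormal h1 h2 hΩ h12 h1Ω h2Ω (S *ᵥ Ω)
  rw [intervalIntegral.integral_congr (g := fun θ => (-6 * π * (cos θ * sin θ ^ 3 * h (cos θ) *
    (exp (κ * cos θ) / Znorm κ))) • (projMat Ω *ᵥ (S *ᵥ Ω))) fun θ _ => ?slice]
  case slice =>
    simp only [sum_mul_one_sub_mul_eq_trace_sub S, mul_smul, intervalIntegral.integral_smul]
    erw [integral_sphere_slice (IsSymm.ext fun i j => hS j i) hΩ h1Ω h2Ω θ]
    rw [hproj]
    simp only [smul_smul]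
    congr 1
    ring
  have hconst : ∀ I : ℝ, (4 * π)⁻¹ * (-6 * π * I) = -6 * (1 / 4 * I) := fun I => by
    field_simp
  rw [intervalIntegral.integral_smul_const, intervalIntegral.integral_const_mul, smul_smul, Ctwo,
    hconst]
  rfl

/-- `∫_{S²} (S : (Id − 3ω⊗ω)) h(ω·Ω) M_Ω(ω) P_{Ω⊥}(ω) dω = −6 C₂ P_{Ω⊥} S Ω`
for a symmetric matrix `S`, with the normalized sphere measure. -/
theorem stmt11 (κ : ℝ) (hκ : 0 < κ) (h : ℝ → ℝ) (hh : Continuous h)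
    (S : Fin 3 → Fin 3 → ℝ) (hS : ∀ i j, S i j = S j i)
    (Ω e₁ e₂ : Fin 3 → ℝ)
    (h1 : ∑ i, e₁ i * e₁ i = 1) (h2 : ∑ i, e₂ i * e₂ i = 1) (hΩ : ∑ i, Ω i * Ω i = 1)
    (h12 : ∑ i, e₁ i * e₂ i = 0) (h1Ω : ∑ i, e₁ i * Ω i = 0) (h2Ω : ∑ i, e₂ i * Ω i = 0) :
    ((4 * π)⁻¹ • (∫ θ in (0:ℝ)..π, ∫ φ in (0:ℝ)..(2 * π),
      (Real.sin θ * h (Real.cos θ) * (Real.exp (κ * Real.cos θ) / Znorm κ) *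
        (∑ i, ∑ j, S i j * ((if i = j then (1:ℝ) else 0) -
          3 * ωpar Ω e₁ e₂ θ φ i * ωpar Ω e₁ e₂ θ φ j))) •
      (fun i => ωpar Ω e₁ e₂ θ φ i -
        (∑ j, ωpar Ω e₁ e₂ θ φ j * Ω j) * Ω i : Fin 3 → ℝ)))
    = (-6 * Ctwo h κ) • (fun i => ∑ j, projMat Ω i j * (∑ k, S j k * Ω k)) :=
  stmt11_general κ h S hS Ω e₁ e₂ h1 h2 hΩ h12 h1Ω h2Ω
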